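/- arXiv:math/0507021 — 5 statements merged into one kernel-verified Lean document; each statement's English description precedes it below -/
import Mathlib

section
/- Let μ be a finite measure on ℝ^K, let λ^1,…,λ^K ∈ ℝ^{|L|}, let ℓ be a response pattern with ℓ_j = 0 for a given j, let 1 ≤ l ≤ L_j, and let v ∈ ℕ^K. Assume the functions g ↦ g^{v+1_k} W_ℓ(g) (for every k, where 1_k is the k-th unit vector in ℕ^K) are μ-integrable. Then Σ_{k=1}^{K} λ^k_{jl} ∫ g^{v+1_k} W_ℓ(g) dμ(g) = ∫ g^{v} W_{ℓ[j↦l]}(g) dμ(g). (This is the main relation connecting unconditional moments, conditional moments and the basis: Σ_k λ^k_{jl}·(M_ℓ·E(G^{v+1_k}|X=ℓ)) = M_{ℓ[j↦l]}·E(G^v|X=ℓ[j↦l]).) -/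
open MeasureTheory Finset

/-- `LLSW lam ℓ g = ∏_{j : ℓ_j ≠ 0} p_{j ℓ_j}(g)` where
`p_{jl}(g) = ∑ k, g k * λ^k_{jl}`; a pattern entry `none` (marginalized
measurement) contributes the factor `1`. -/
noncomputable def LLSW {J K : ℕ} {L : Fin J → ℕ}
    (lam : Fin K → ((j : Fin J) × Fin (L j)) → ℝ)
    (ℓ : (j : Fin J) → Option (Fin (L j))) (g : Fin K → ℝ) : ℝ :=
  ∏ j, (ℓ j).elim 1 fun l => ∑ k, g k * lam k ⟨j, l⟩

/-- the main relation connecting unconditional moments,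
conditional moments and the basis:
`∑ k, λ^k_{jl} · ∫ g^(v+1ₖ) W_ℓ(g) dμ = ∫ g^v W_{ℓ[j↦l]}(g) dμ`. -/
theorem stmt_1
    (J K : ℕ) (hJ : 1 ≤ J) (L : Fin J → ℕ) (hL : ∀ j, 1 ≤ L j)
    (μ : Measure (Fin K → ℝ)) [IsFiniteMeasure μ]
    (lam : Fin K → ((j : Fin J) × Fin (L j)) → ℝ)
    (ℓ : (j : Fin J) → Option (Fin (L j)))
    (j : Fin J) (hj : ℓ j = none) (l : Fin (L j))
    (v : Fin K → ℕ)
    (hint : ∀ k : Fin K, Integrable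
      (fun g => (∏ k', g k' ^ ((v + Pi.single k 1) : Fin K → ℕ) k') * LLSW lam ℓ g) μ) :
    ∑ k, lam k ⟨j, l⟩ *
        ∫ g, (∏ k', g k' ^ ((v + Pi.single k 1) : Fin K → ℕ) k') * LLSW lam ℓ g ∂μ
      = ∫ g, (∏ k', g k' ^ v k') *
          LLSW lam (Function.update ℓ j (some l)) g ∂μ := by
  have hpow : ∀ (k : Fin K) (g : Fin K → ℝ),
      (∏ k', g k' ^ ((v + Pi.single k 1) : Fin K → ℕ) k')
        = (∏ k', g k' ^ v k') * g k := by
    intro k g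
    have : ∀ k' : Fin K, g k' ^ ((v + Pi.single k 1) : Fin K → ℕ) k'
        = g k' ^ v k' * g k' ^ (Pi.single k 1 : Fin K → ℕ) k' := by
      intro k'; simp [Pi.add_apply, pow_add]
    rw [Finset.prod_congr rfl fun k' _ => this k', Finset.prod_mul_distrib]
    congr 1
    rw [Finset.prod_eq_single k (fun b _ hb => by simp [Pi.single_apply, hb])
      (fun h => absurd (Finset.mem_univ k) h)]
    simp
  have hLLSW : ∀ g : Fin K → ℝ,
      LLSW lam (Function.update ℓ j (some l)) g
        = (∑ k, g k * lam k ⟨j, l⟩) * LLSW lam ℓ g := by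
    intro g
    unfold LLSW
    rw [← Finset.mul_prod_erase Finset.univ _ (Finset.mem_univ j),
        ← Finset.mul_prod_erase Finset.univ
          (fun j' => (ℓ j').elim 1 fun l' => ∑ k, g k * lam k ⟨j', l'⟩) (Finset.mem_univ j)]
    rw [hj]
    simp only [Function.update_self, Option.elim]
    rw [Finset.prod_congr rfl fun j' hj' => by
      rw [Function.update_of_ne (Finset.ne_of_mem_erase hj')]]
    ring
  calc ∑ k, lam k ⟨j, l⟩ *
        ∫ g, (∏ k', g k' ^ ((v + Pi.single k 1) : Fin K → ℕ) k') * LLSW lam ℓ g ∂μ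
      = ∑ k, ∫ g, lam k ⟨j, l⟩ *
          ((∏ k', g k' ^ ((v + Pi.single k 1) : Fin K → ℕ) k') * LLSW lam ℓ g) ∂μ := by
        refine Finset.sum_congr rfl fun k _ => ?_
        rw [integral_const_mul]
    _ = ∫ g, ∑ k, lam k ⟨j, l⟩ *
          ((∏ k', g k' ^ ((v + Pi.single k 1) : Fin K → ℕ) k') * LLSW lam ℓ g) ∂μ := by
        rw [integral_finset_sum _ fun k _ => (hint k).const_mul _]
    _ = ∫ g, (∏ k', g k' ^ v k') *
          LLSW lam (Function.update ℓ j (some l)) g ∂μ := by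
        refine integral_congr_ae (Filter.Eventually.of_forall fun g => ?_)
        dsimp only
        rw [hLLSW g]
        rw [Finset.sum_congr rfl fun k _ => by rw [hpow k g]]
        simp only [Finset.sum_mul, Finset.mul_sum]
        exact Finset.sum_congr rfl fun k _ => by ring
end

section
/- Let λ^1,…,λ^K ∈ ℝ^{|L|} satisfy Σ_{l=1}^{L_j} λ^k_{jl} = 1 for every j and every k, and let μ be a probability measure on ℝ^K whose support is contained in {g : Σ_k g_k = 1}, such that g ↦ |g|^v W_ℓ(g) is μ-integrable for all v ∈ ℕ^K with Σ_k v_k ≤ J and all response patterns ℓ. Set α^k_{jl} = λ^k_{jl}, h^v_ℓ = ∫ g^v W_ℓ(g) dμ(g), and M_ℓ = ∫ W_ℓ(g) dμ(g). Then (α, h) is a solution of the main system of equations: (i) Σ_k α^k_{jl} h^{v+1_k}_ℓ = h^v_{ℓ[j↦l]} for every response pattern ℓ, every j with ℓ_j = 0, every 1 ≤ l ≤ L_j, and every v ∈ ℕ^K with Σ_k v_k ≤ J−1; (ii) h^{(0,…,0)}_ℓ = M_ℓ for every response pattern ℓ; (iii) Σ_{v ∈ ℕ^K, Σ_k v_k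 = J'} (J'!/∏_k v_k!) h^v_{(0,…,0)} = 1 for every 0 ≤ J' ≤ J. -/
open MeasureTheory Finset

lemma llsw_continuous {J K : ℕ} {L : Fin J → ℕ}
    (lam : Fin K → ((j : Fin J) × Fin (L j)) → ℝ)
    (ℓ : (j : Fin J) → Option (Fin (L j))) :
    Continuous (LLSW lam ℓ) := by
  unfold LLSW
  apply continuous_finset_prod
  intro j _
  rcases ℓ j with _ | l
  · simpa using continuous_const
  · simp only [Option.elim]
    exact continuous_finset_sum _ fun k _ => (continuous_apply k).mul continuous_const

lemma llsw_update {J K : ℕ} {L : Fin J → ℕ}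
    (lam : Fin K → ((j : Fin J) × Fin (L j)) → ℝ)
    (ℓ : (j : Fin J) → Option (Fin (L j))) (j : Fin J) (hj : ℓ j = none)
    (l : Fin (L j)) (g : Fin K → ℝ) :
    LLSW lam (Function.update ℓ j (some l)) g
      = (∑ k, g k * lam k ⟨j, l⟩) * LLSW lam ℓ g := by
  unfold LLSW
  rw [← Finset.mul_prod_erase univ
      (fun j' => ((Function.update ℓ j (some l)) j').elim 1
        fun l' => ∑ k, g k * lam k ⟨j', l'⟩) (mem_univ j),
    ← Finset.mul_prod_erase univ
      (fun j' => (ℓ j').elim 1 fun l' => ∑ k, g k * lam k ⟨j', l'⟩) (mem_univ j)]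
  simp only [Function.update_self, hj, Option.elim, one_mul]
  congr 1
  refine Finset.prod_congr rfl fun j' hj' => ?_
  rw [Function.update_of_ne (Finset.ne_of_mem_erase hj')]

lemma llsw_integrable {J K : ℕ} {L : Fin J → ℕ}
    (lam : Fin K → ((j : Fin J) × Fin (L j)) → ℝ)
    (μ : Measure (Fin K → ℝ))
    (hint : ∀ v : Fin K → ℕ, ∑ k, v k ≤ J →
      ∀ ℓ : (j : Fin J) → Option (Fin (L j)),
        Integrable (fun g => (∏ k, |g k| ^ v k) * LLSW lam ℓ g) μ)
    (v : Fin K → ℕ) (hv : ∑ k, v k ≤ J) (ℓ : (j : Fin J) → Option (Fin (L j))) :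
    Integrable (fun g => (∏ k, g k ^ v k) * LLSW lam ℓ g) μ := by
  refine Integrable.mono' (hint v hv ℓ).abs ?_ ?_
  · exact ((continuous_finset_prod _ fun k _ =>
      (continuous_apply k).pow _).mul (llsw_continuous lam ℓ)).aestronglyMeasurable
  · filter_upwards with g
    simp [abs_mul, Finset.abs_prod, abs_pow, abs_abs, le_refl]

/-- the data `α^k_{jl} = λ^k_{jl}`, `h^v_ℓ = ∫ g^v W_ℓ(g) dμ`,
`M_ℓ = ∫ W_ℓ(g) dμ` obtained from a normalized basis `λ` and a probability
measure `μ` supported on the hyperplane `∑ k, g k = 1` solve the main system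
of equations (main moment relations plus the two normalization conditions). -/
theorem stmt_3
    (J K : ℕ) (hJ : 1 ≤ J) (L : Fin J → ℕ) (hL : ∀ j, 1 ≤ L j)
    (lam : Fin K → ((j : Fin J) × Fin (L j)) → ℝ)
    (hlam : ∀ k j, ∑ l, lam k ⟨j, l⟩ = 1)
    (μ : Measure (Fin K → ℝ)) [IsProbabilityMeasure μ]
    (hsupp : ∀ᵐ g ∂μ, ∑ k, g k = 1)
    (hint : ∀ v : Fin K → ℕ, ∑ k, v k ≤ J →
      ∀ ℓ : (j : Fin J) → Option (Fin (L j)),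
        Integrable (fun g => (∏ k, |g k| ^ v k) * LLSW lam ℓ g) μ)
    (h : ((j : Fin J) → Option (Fin (L j))) → (Fin K → ℕ) → ℝ)
    (hh : ∀ ℓ v, h ℓ v = ∫ g, (∏ k, g k ^ v k) * LLSW lam ℓ g ∂μ)
    (M : ((j : Fin J) → Option (Fin (L j))) → ℝ)
    (hM : ∀ ℓ, M ℓ = ∫ g, LLSW lam ℓ g ∂μ) :
    (∀ (ℓ : (j : Fin J) → Option (Fin (L j))) (j : Fin J), ℓ j = none →
      ∀ (l : Fin (L j)) (v : Fin K → ℕ), ∑ k, v k + 1 ≤ J →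
        ∑ k, lam k ⟨j, l⟩ * h ℓ ((v + Pi.single k 1 : Fin K → ℕ))
          = h (Function.update ℓ j (some l)) v) ∧
    (∀ ℓ, h ℓ 0 = M ℓ) ∧
    (∀ J' : ℕ, J' ≤ J →
      ∑ v ∈ (Fintype.piFinset fun _ : Fin K => Finset.range (J' + 1)).filter
          (fun v => ∑ k, v k = J'),
        ((J'.factorial : ℝ) / ∏ k, ((v k).factorial : ℝ)) *
          h (fun _ => none) v = 1) := by
  refine ⟨?_, ?_, ?_⟩
  · -- main moment relations
    intro ℓ j hj l v hv
    have hvk : ∀ k : Fin K, ∑ k', (v + Pi.single k 1 : Fin K → ℕ) k' ≤ J := by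
      intro k
      simp only [Pi.add_apply, Finset.sum_add_distrib, Finset.sum_pi_single', mem_univ, if_true]
      exact hv
    calc ∑ k, lam k ⟨j, l⟩ * h ℓ (v + Pi.single k 1)
        = ∑ k, ∫ g, lam k ⟨j, l⟩ *
            ((∏ k', g k' ^ (v + Pi.single k 1 : Fin K → ℕ) k') * LLSW lam ℓ g) ∂μ := by
          refine Finset.sum_congr rfl fun k _ => ?_
          rw [hh, integral_const_mul]
      _ = ∫ g, ∑ k, lam k ⟨j, l⟩ *
            ((∏ k', g k' ^ (v + Pi.single k 1 : Fin K → ℕ) k') * LLSW lam ℓ g) ∂μ := by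
          exact (integral_finset_sum _ fun k _ =>
            (llsw_integrable lam μ hint _ (hvk k) ℓ).const_mul _).symm
      _ = ∫ g, (∏ k', g k' ^ v k') * LLSW lam (Function.update ℓ j (some l)) g ∂μ := by
          congr 1
          funext g
          rw [llsw_update lam ℓ j hj l g]
          have hp : ∀ k : Fin K, ∏ k', g k' ^ (v + Pi.single k 1 : Fin K → ℕ) k'
              = (∏ k', g k' ^ v k') * g k := by
            intro k
            simp only [Pi.add_apply, pow_add, Finset.prod_mul_distrib]
            congr 1
            rw [Finset.prod_eq_single k
              (fun b _ hb => by rw [Pi.single_eq_of_ne hb, pow_zero]) (by simp)]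
            simp
          simp only [hp]
          rw [Finset.sum_congr rfl (fun k _ =>
            (by ring : lam k ⟨j, l⟩ * ((∏ k', g k' ^ v k') * g k * LLSW lam ℓ g)
              = (∏ k', g k' ^ v k') * LLSW lam ℓ g * (g k * lam k ⟨j, l⟩))),
            ← Finset.mul_sum]
          ring
      _ = h (Function.update ℓ j (some l)) v := (hh _ _).symm
  · -- h ℓ 0 = M ℓ
    intro ℓ
    rw [hh, hM]
    congr 1
    funext g
    simp
  · -- normalization
    intro J' hJ'
    have hMset : (Fintype.piFinset fun _ : Fin K => Finset.range (J' + 1)).filter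
        (fun v => ∑ k, v k = J') = piAntidiag univ J' := by
      ext v
      simp only [mem_filter, Fintype.mem_piFinset, mem_range, Nat.lt_succ_iff, mem_piAntidiag,
        mem_univ, implies_true, and_true]
      constructor
      · exact And.right
      · intro hs
        exact ⟨fun k => hs ▸ Finset.single_le_sum (fun _ _ => Nat.zero_le _) (mem_univ k), hs⟩
    rw [hMset]
    have hcast : ∀ v ∈ piAntidiag (univ : Finset (Fin K)) J',
        ((J'.factorial : ℝ) / ∏ k, ((v k).factorial : ℝ))
          = (Nat.multinomial univ v : ℝ) := by
      intro v hv
      rw [mem_piAntidiag] at hv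
      rw [Nat.multinomial, Nat.cast_div (Nat.prod_factorial_dvd_factorial_sum _ _)
        (Nat.cast_ne_zero.2 (Nat.prod_factorial_pos _ _).ne'), hv.1, Nat.cast_prod]
    calc ∑ v ∈ piAntidiag univ J',
          ((J'.factorial : ℝ) / ∏ k, ((v k).factorial : ℝ)) * h (fun _ => none) v
        = ∑ v ∈ piAntidiag univ J', ∫ g, (Nat.multinomial univ v : ℝ) *
            ((∏ k, g k ^ v k) * LLSW lam (fun _ => none) g) ∂μ := by
          refine Finset.sum_congr rfl fun v hv => ?_
          rw [hcast v hv, hh, integral_const_mul]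
      _ = ∫ g, ∑ v ∈ piAntidiag univ J', (Nat.multinomial univ v : ℝ) *
            ((∏ k, g k ^ v k) * LLSW lam (fun _ => none) g) ∂μ := by
          refine (integral_finset_sum _ fun v hv => ?_).symm
          rw [mem_piAntidiag] at hv
          exact (llsw_integrable lam μ hint v (hv.1 ▸ hJ') _).const_mul _
      _ = ∫ g, (∑ k, g k) ^ J' ∂μ := by
          congr 1
          funext g
          rw [Finset.sum_pow_eq_sum_piAntidiag]
          refine Finset.sum_congr rfl fun v hv => ?_
          simp [LLSW]
      _ = 1 := by
          rw [integral_congr_ae ((by filter_upwards [hsupp] with g hg; rw [hg, one_pow] :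
            (fun g : Fin K → ℝ => (∑ k, g k) ^ J') =ᵐ[μ] fun _ => (1 : ℝ)))]
          simp
end

section
/- Let Q be a linear subspace of ℝ^{|L|} and let μ be a finite measure on ℝ^{|L|} whose support is contained in Q. Let ℓ be a response pattern, and assume β ↦ β·∏_{j: ℓ_j ≠ 0} β_{jℓ_j} is Bochner μ-integrable. Define the vector c_ℓ ∈ ℝ^{|L|} by c_ℓ = ∫ β ∏_{j: ℓ_j ≠ 0} β_{jℓ_j} dμ(β). Then (a) c_ℓ ∈ Q, and (b) for every pair (j,l) with ℓ_j = 0, the (j,l)-entry of c_ℓ equals the unconditional moment M_{ℓ[j↦l]} = ∫ ∏_{j': (ℓ[j↦l])_{j'} ≠ 0} β_{j'(ℓ[j↦l])_{j'}} dμ(β). Consequently, the moment matrix (whose column indexed by ℓ has known entries M_{ℓ[j↦l]} at positions (j,l) with ℓ_j = 0 and unknown entries elsewhere) has a completion in which all columns belong to Q. -/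
open MeasureTheory Finset

/-- `LLSprod ℓ β = ∏_{j : ℓ_j ≠ 0} β_{j ℓ_j}`; a pattern entry `none`
(marginalized measurement) contributes the factor `1`. -/
def LLSprod {J : ℕ} {L : Fin J → ℕ}
    (ℓ : (j : Fin J) → Option (Fin (L j)))
    (β : ((j : Fin J) × Fin (L j)) → ℝ) : ℝ :=
  ∏ j, (ℓ j).elim 1 fun l => β ⟨j, l⟩

lemma LLSprod_update {J : ℕ} {L : Fin J → ℕ}
    (ℓ : (j : Fin J) → Option (Fin (L j))) (j : Fin J) (hj : ℓ j = none)
    (l : Fin (L j)) (β : ((j : Fin J) × Fin (L j)) → ℝ) :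
    LLSprod (Function.update ℓ j (some l)) β = β ⟨j, l⟩ * LLSprod ℓ β := by
  unfold LLSprod
  rw [Fintype.prod_eq_mul_prod_compl j, Fintype.prod_eq_mul_prod_compl j,
    Function.update_self, hj]
  have h : (∏ x ∈ {j}ᶜ, (Function.update ℓ j (some l) x).elim 1 fun l => β ⟨x, l⟩)
      = ∏ x ∈ {j}ᶜ, (ℓ x).elim 1 fun l => β ⟨x, l⟩ := by
    apply Finset.prod_congr rfl
    intro x hx
    rw [Function.update_of_ne (by simpa using hx)]
  rw [h]
  simp only [Option.elim_some, Option.elim_none]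
  ring

/-- for a finite measure `μ` supported on a linear subspace `Q`,
the vector `c_ℓ = ∫ β ∏_{j : ℓ_j ≠ 0} β_{j ℓ_j} dμ(β)` (a) belongs to `Q`, and
(b) has the unconditional moment `M_{ℓ[j↦l]}` as its `(j,l)` entry whenever
`ℓ_j = 0`.  Hence the moment matrix has a completion whose columns all lie
in `Q`. -/
theorem stmt_4
    (J : ℕ) (hJ : 1 ≤ J) (L : Fin J → ℕ) (hL : ∀ j, 1 ≤ L j)
    (Q : Submodule ℝ (((j : Fin J) × Fin (L j)) → ℝ))
    (μ : Measure (((j : Fin J) × Fin (L j)) → ℝ)) [IsFiniteMeasure μ]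
    (hsupp : ∀ᵐ β ∂μ, β ∈ Q)
    (ℓ : (j : Fin J) → Option (Fin (L j)))
    (hint : Integrable (fun β => LLSprod ℓ β • β) μ) :
    (∫ β, LLSprod ℓ β • β ∂μ) ∈ Q ∧
    ∀ (j : Fin J), ℓ j = none → ∀ l : Fin (L j),
      (∫ β, LLSprod ℓ β • β ∂μ) ⟨j, l⟩
        = ∫ β, LLSprod (Function.update ℓ j (some l)) β ∂μ := by
  constructor
  · -- part (a)
    by_contra hc
    obtain ⟨f, hfc, hfQ⟩ := Q.exists_dual_map_eq_bot_of_notMem hc inferInstance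
    have hfQ' : ∀ x ∈ Q, f x = 0 := by
      intro x hx
      have : f x ∈ Q.map f := Submodule.mem_map_of_mem hx
      rwa [hfQ, Submodule.mem_bot] at this
    set F : (((j : Fin J) × Fin (L j)) → ℝ) →L[ℝ] ℝ :=
      LinearMap.toContinuousLinearMap f
    have hcomm : ∫ β, F (LLSprod ℓ β • β) ∂μ = F (∫ β, LLSprod ℓ β • β ∂μ) :=
      F.integral_comp_comm hint
    have hzero : ∫ β, F (LLSprod ℓ β • β) ∂μ = 0 := by
      have : ∀ᵐ β ∂μ, F (LLSprod ℓ β • β) = 0 := by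
        filter_upwards [hsupp] with β hβ
        have : f (LLSprod ℓ β • β) = LLSprod ℓ β * f β := by
          rw [f.map_smul]; rfl
        simp only [F, LinearMap.coe_toContinuousLinearMap', this, hfQ' β hβ, mul_zero]
      rw [integral_congr_ae this, integral_zero]
    exact hfc (by simpa [F, LinearMap.coe_toContinuousLinearMap'] using hcomm.symm.trans hzero)
  · intro j hj l
    have hFeq : ∀ β : ((j : Fin J) × Fin (L j)) → ℝ,
        (LLSprod ℓ β • β) ⟨j, l⟩ = LLSprod (Function.update ℓ j (some l)) β := by
      intro β
      rw [LLSprod_update ℓ j hj l β]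
      simp [mul_comm]
    set F : (((j : Fin J) × Fin (L j)) → ℝ) →L[ℝ] ℝ :=
      ContinuousLinearMap.proj (R := ℝ) (φ := fun _ => ℝ) ⟨j, l⟩
    have : (∫ β, LLSprod ℓ β • β ∂μ) ⟨j, l⟩ = ∫ β, (LLSprod ℓ β • β) ⟨j, l⟩ ∂μ :=
      (F.integral_comp_comm hint).symm
    rw [this]
    exact integral_congr_ae (Filter.Eventually.of_forall fun β => hFeq β)
end

section
/- Let L ≥ 2 be an integer and set c = (√L − 1)/(L − 1). Define the linear map A : ℝ^L → ℝ^{L−1} by (Ad)_i = d_{i+1} − c·d_1 for i = 1,…,L−1 (i.e., A has first column equal to (−c,…,−c)ᵀ and the remaining (L−1)×(L−1) block equal to the identity). Then ‖Ad‖ = ‖d‖ (Euclidean norms) for every d ∈ ℝ^L with Σ_{l=1}^{L} d_l = 0, and the restriction of A to the hyperplane {d ∈ ℝ^L : Σ_l d_l = 0} is a linear isometric bijection onto ℝ^{L−1}. -/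
/-!
The first coordinate `d₀` of a point of the hyperplane `∑ d = 0` is minus the sum of the others,
so expanding `∑ᵢ (dᵢ₊₁ - c d₀)²` leaves `∑ᵢ dᵢ₊₁² + (m c² + 2c) d₀²`, and `c = (√(m+1) - 1)/m` is
exactly the positive root of `m c² + 2c = 1`. The same identity gives `(1 + m c)² = m + 1 ≠ 0`,
which lets one solve for a preimage: `d₀ = -(∑ y) / (1 + m c)`, `dᵢ₊₁ = yᵢ + c d₀`.
-/

open Finset

section

variable {m : ℕ} {c : ℝ}

lemma mul_sq_add_two_mul_eq_one (hm : 1 ≤ m) (hc : c = (Real.sqrt (m + 1) - 1) / m) :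
    m * c ^ 2 + 2 * c = 1 := by
  have hm0 : (m : ℝ) ≠ 0 := by positivity
  have hs : Real.sqrt (m + 1) ^ 2 = m + 1 := Real.sq_sqrt (by positivity)
  rw [hc]
  field_simp
  linear_combination hs

lemma one_add_mul_ne_zero (hc : m * c ^ 2 + 2 * c = 1) : 1 + m * c ≠ 0 := by
  intro h
  have hsq : (1 + m * c) ^ 2 = m + 1 := by linear_combination m * hc
  rw [h] at hsq
  linarith [(m.cast_nonneg : (0 : ℝ) ≤ m)]

lemma sum_sq_sub_mul_eq_sum_sq (hc : m * c ^ 2 + 2 * c = 1) (x : Fin (m + 1) → ℝ)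
    (hx : ∑ l, x l = 0) :
    ∑ i : Fin m, (x i.succ - c * x 0) ^ 2 = ∑ l, x l ^ 2 := by
  have htail : ∑ i : Fin m, x i.succ = -x 0 := by
    rw [Fin.sum_univ_succ] at hx
    linarith
  have hexpand : ∑ i : Fin m, (x i.succ - c * x 0) ^ 2
      = ∑ i : Fin m, x i.succ ^ 2 - 2 * c * x 0 * ∑ i : Fin m, x i.succ + m * (c * x 0) ^ 2 := by
    rw [mul_sum, show (m : ℝ) * (c * x 0) ^ 2 = ∑ _i : Fin m, (c * x 0) ^ 2 by simp,
      ← sum_sub_distrib, ← sum_add_distrib]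
    exact sum_congr rfl fun i _ => by ring
  rw [hexpand, htail, Fin.sum_univ_succ]
  linear_combination x 0 ^ 2 * hc

lemma norm_eq_of_apply_eq_sub_mul (hc : m * c ^ 2 + 2 * c = 1)
    {e : EuclideanSpace ℝ (Fin (m + 1))} (he : ∑ l, e l = 0)
    {v : EuclideanSpace ℝ (Fin m)} (hv : ∀ i, v i = e i.succ - c * e 0) :
    ‖v‖ = ‖e‖ := by
  simp only [EuclideanSpace.norm_eq, Real.norm_eq_abs, sq_abs, hv,
    sum_sq_sub_mul_eq_sum_sq hc e he]

lemma exists_sum_eq_zero_and_sub_mul_eq (hc : m * c ^ 2 + 2 * c = 1)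
    (y : EuclideanSpace ℝ (Fin m)) :
    ∃ d : EuclideanSpace ℝ (Fin (m + 1)), ∑ l, d l = 0 ∧ ∀ i, d i.succ - c * d 0 = y i := by
  set t : ℝ := -(∑ i, y i) / (1 + m * c)
  have ht : t * (1 + m * c) = -∑ i, y i := div_mul_cancel₀ _ (one_add_mul_ne_zero hc)
  refine ⟨WithLp.toLp 2 (Fin.cons t fun i => y i + c * t), ?_, fun i => by simp⟩
  simp only [Fin.sum_univ_succ, Fin.cons_zero, Fin.cons_succ, sum_add_distrib,
    sum_const, card_univ, Fintype.card_fin, nsmul_eq_mul]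
  linear_combination ht

end

/-- with `L = m + 1 ≥ 2` and `c = (√L − 1)/(L − 1)`, the linear
map `A : ℝ^L → ℝ^{L−1}`, `(A d)_i = d_{i+1} − c·d_1`, preserves the Euclidean
norm of every `d` with `∑ l, d l = 0`, preserves distances between points of
the hyperplane `{d : ∑ l, d l = 0}`, and restricts to a bijection from this
hyperplane onto `ℝ^{L−1}`. -/
theorem stmt_8
    (m : ℕ) (hm : 1 ≤ m)
    (c : ℝ) (hc : c = (Real.sqrt (m + 1) - 1) / m)
    (A : EuclideanSpace ℝ (Fin (m + 1)) → EuclideanSpace ℝ (Fin m))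
    (hA : ∀ (d : EuclideanSpace ℝ (Fin (m + 1))) (i : Fin m),
      A d i = d i.succ - c * d 0) :
    (∀ d : EuclideanSpace ℝ (Fin (m + 1)), ∑ l, d l = 0 → ‖A d‖ = ‖d‖) ∧
    (∀ d ∈ {d : EuclideanSpace ℝ (Fin (m + 1)) | ∑ l, d l = 0},
      ∀ d' ∈ {d : EuclideanSpace ℝ (Fin (m + 1)) | ∑ l, d l = 0},
        dist (A d) (A d') = dist d d') ∧
    Set.BijOn A {d : EuclideanSpace ℝ (Fin (m + 1)) | ∑ l, d l = 0}
      Set.univ := by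
  have hc' := mul_sq_add_two_mul_eq_one hm hc
  have hdist : ∀ d ∈ {d : EuclideanSpace ℝ (Fin (m + 1)) | ∑ l, d l = 0},
      ∀ d' ∈ {d : EuclideanSpace ℝ (Fin (m + 1)) | ∑ l, d l = 0},
        dist (A d) (A d') = dist d d' := by
    intro d hd d' hd'
    rw [dist_eq_norm, dist_eq_norm]
    refine norm_eq_of_apply_eq_sub_mul hc' ?_ fun i => ?_
    · simp_all [sum_sub_distrib]
    · simp only [PiLp.sub_apply, hA]
      ring
  refine ⟨fun d hd => norm_eq_of_apply_eq_sub_mul hc' hd (hA d), hdist,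
    Set.mapsTo_univ _ _, fun d hd d' hd' h => ?_, fun y _ => ?_⟩
  · rw [← dist_eq_zero, ← hdist d hd d' hd', h, dist_self]
  · obtain ⟨d, hd, hdy⟩ := exists_sum_eq_zero_and_sub_mul_eq hc' y
    exact ⟨d, hd, PiLp.ext fun i => (hA d i).trans (hdy i)⟩
end

section
/- For each j = 1,…,J with L_j ≥ 2 let c_j = (√L_j − 1)/(L_j − 1) and let A_j : ℝ^{L_j} → ℝ^{L_j − 1} be the linear map (A_j d)_i = d_{i+1} − c_j·d_1. Let A : ℝ^{|L|} → ℝ^{|L|−J} be the block-diagonal map acting as A_j on the j-th block of coordinates. Then: (a) for all x, y ∈ ℝ^{|L|} satisfying Σ_{l=1}^{L_j} x_{jl} = Σ_{l=1}^{L_j} y_{jl} for every j, one has ‖Ax − Ay‖ = ‖x − y‖; and (b) the image under A of the affine subspace S = {x ∈ ℝ^{|L|} : Σ_{l=1}^{L_j} x_{jl} = 1 for every j} is all of ℝ^{|L|−J}. Hence A restricted to S is an isometry of S onto ℝ^{|L|−J}. -/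
/-!
Write `d = x - y`; its block sums vanish, so on each block `d₀ = -∑ᵢ d_{i+1}`. Expanding
`∑ᵢ (d_{i+1} - c d₀)²` and substituting this gives `∑ᵢ d_{i+1}² + (2c + (L - 1)c²) d₀²`, and
`c = (√L - 1)/(L - 1)` is exactly the positive root of `(L - 1)c² + 2c = 1`. For surjectivity,
each block is solved explicitly: `d_{i+1} = zᵢ + c t`, `d₀ = t`, whose sum is `√L t + ∑ᵢ zᵢ`
because `1 + (L - 1)c = √L`.
-/

open Finset

lemma Fin.sum_univ_eq_zero_add_sum_sub_one {M : Type*} [AddCommMonoid M] {n : ℕ} (hn : 1 ≤ n)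
    (f : Fin n → M) :
    ∑ l, f l = f ⟨0, hn⟩ + ∑ i : Fin (n - 1), f ⟨i + 1, Nat.add_lt_of_lt_sub i.isLt⟩ := by
  obtain ⟨m, rfl⟩ : ∃ m, n = m + 1 := ⟨n - 1, by omega⟩
  exact Fin.sum_univ_succ f

lemma EuclideanSpace.norm_sq_sigma {J : Type*} {κ : J → Type*} [Fintype J] [∀ j, Fintype (κ j)]
    (x : EuclideanSpace ℝ ((j : J) × κ j)) : ‖x‖ ^ 2 = ∑ j, ∑ l, x ⟨j, l⟩ ^ 2 := by
  simp only [EuclideanSpace.norm_sq_eq, Real.norm_eq_abs, sq_abs, Fintype.sum_sigma]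

lemma sum_sub_mul_sq_eq_sq_add_sum_sq {ι : Type*} [Fintype ι] {c a : ℝ} {e : ι → ℝ}
    (hc : 2 * c + Fintype.card ι * c ^ 2 = 1) (he : a + ∑ i, e i = 0) :
    ∑ i, (e i - c * a) ^ 2 = a ^ 2 + ∑ i, e i ^ 2 := by
  have hexpand : ∑ i, (e i - c * a) ^ 2
      = ∑ i, e i ^ 2 - 2 * c * a * ∑ i, e i + Fintype.card ι * (c * a) ^ 2 := by
    simp only [sub_sq, sum_add_distrib, sum_sub_distrib, mul_sum, sum_const, card_univ,
      nsmul_eq_mul]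
    congr 2
    exact sum_congr rfl fun i _ => by ring
  rw [hexpand, eq_neg_of_add_eq_zero_right he]
  linear_combination a ^ 2 * hc

lemma sub_one_mul_eq_sqrt_sub_one {x c : ℝ} (hx : x ≠ 1) (hc : c = (√x - 1) / (x - 1)) :
    (x - 1) * c = √x - 1 := by
  rw [hc, mul_div_cancel₀ _ (sub_ne_zero.mpr hx)]

lemma two_mul_add_mul_sq_eq_one {x c : ℝ} (hx₀ : 0 ≤ x) (hx : x ≠ 1)
    (hc : c = (√x - 1) / (x - 1)) : 2 * c + (x - 1) * c ^ 2 = 1 := by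
  refine mul_left_cancel₀ (sub_ne_zero.mpr hx) ?_
  linear_combination (2 + (x - 1) * c + √x - 1) * sub_one_mul_eq_sqrt_sub_one hx hc +
    Real.sq_sqrt hx₀

section Block

variable {n : ℕ} {c : ℝ}

lemma sum_sq_succ_sub_mul_zero (hn : 2 ≤ n) (hc : c = (√n - 1) / ((n : ℝ) - 1))
    {d : Fin n → ℝ} (hd : ∑ l, d l = 0) :
    ∑ i : Fin (n - 1), (d ⟨i + 1, Nat.add_lt_of_lt_sub i.isLt⟩ - c * d ⟨0, by omega⟩) ^ 2
      = ∑ l, d l ^ 2 := by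
  rw [Fin.sum_univ_eq_zero_add_sum_sub_one (by omega)] at hd
  conv_rhs => rw [Fin.sum_univ_eq_zero_add_sum_sub_one (by omega)]
  refine sum_sub_mul_sq_eq_sq_add_sum_sq ?_ hd
  rw [Fintype.card_fin, Nat.cast_pred (by omega)]
  exact two_mul_add_mul_sq_eq_one n.cast_nonneg (by norm_cast; omega) hc

lemma exists_sum_eq_one_succ_sub_mul_zero (hn : 2 ≤ n) (hc : c = (√n - 1) / ((n : ℝ) - 1))
    (z : Fin (n - 1) → ℝ) :
    ∃ d : Fin n → ℝ, ∑ l, d l = 1 ∧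
      ∀ i : Fin (n - 1), d ⟨i + 1, Nat.add_lt_of_lt_sub i.isLt⟩ - c * d ⟨0, by omega⟩ = z i := by
  set t := (1 - ∑ i, z i) / √n
  refine ⟨fun l => if h : l.1 = 0 then t else z ⟨l - 1, by omega⟩ + c * t, ?_, fun i => ?_⟩
  · rw [Fin.sum_univ_eq_zero_add_sum_sub_one (by omega)]
    simp only [Nat.add_one_ne_zero, dite_false, dite_true, add_tsub_cancel_right, sum_add_distrib,
      sum_const, card_univ, Fintype.card_fin, nsmul_eq_mul, Nat.cast_pred (by omega : 0 < n)]
    have ht : t * √n = 1 - ∑ i, z i := div_mul_cancel₀ _ (by positivity)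
    linear_combination t * sub_one_mul_eq_sqrt_sub_one (by norm_cast; omega) hc + ht
  · simp

end Block

/-- the block-diagonal map `A : ℝ^{|L|} → ℝ^{|L|−J}` whose `j`-th
block is `(A_j d)_i = d_{i+1} − c_j·d_1` with `c_j = (√L_j − 1)/(L_j − 1)`:
(a) preserves Euclidean distances between vectors having equal block sums, and
(b) maps the affine subspace `S = {x : ∑_l x_{jl} = 1 for all j}` onto all of
`ℝ^{|L|−J}`.  Hence `A` restricted to `S` is an isometry of `S` onto
`ℝ^{|L|−J}`. -/
theorem stmt_9
    (J : ℕ) (L : Fin J → ℕ) (hL : ∀ j, 2 ≤ L j)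
    (c : Fin J → ℝ) (hc : ∀ j, c j = (Real.sqrt (L j) - 1) / ((L j : ℝ) - 1))
    (A : EuclideanSpace ℝ ((j : Fin J) × Fin (L j)) →
         EuclideanSpace ℝ ((j : Fin J) × Fin (L j - 1)))
    (hA : ∀ (x : EuclideanSpace ℝ ((j : Fin J) × Fin (L j)))
        (j : Fin J) (i : Fin (L j - 1)),
      A x ⟨j, i⟩ = x ⟨j, ⟨i.1 + 1, by have := i.isLt; omega⟩⟩
        - c j * x ⟨j, ⟨0, by have := hL j; omega⟩⟩) :
    (∀ x y : EuclideanSpace ℝ ((j : Fin J) × Fin (L j)),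
      (∀ j, ∑ l, x ⟨j, l⟩ = ∑ l, y ⟨j, l⟩) → ‖A x - A y‖ = ‖x - y‖) ∧
    A '' {x : EuclideanSpace ℝ ((j : Fin J) × Fin (L j)) |
        ∀ j, ∑ l, x ⟨j, l⟩ = 1} = Set.univ := by
  constructor
  · intro x y hxy
    refine (sq_eq_sq₀ (norm_nonneg _) (norm_nonneg _)).mp ?_
    rw [EuclideanSpace.norm_sq_sigma, EuclideanSpace.norm_sq_sigma]
    refine sum_congr rfl fun j _ => ?_
    have hd : ∑ l, (x - y) ⟨j, l⟩ = 0 := by simp [sum_sub_distrib, hxy j]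
    rw [← sum_sq_succ_sub_mul_zero (hL j) (hc j) hd]
    refine sum_congr rfl fun i _ => ?_
    simp only [PiLp.sub_apply, hA]
    ring
  · refine Set.eq_univ_of_forall fun z => ?_
    choose d hd using fun j => exists_sum_eq_one_succ_sub_mul_zero (hL j) (hc j) (z ⟨j, ·⟩)
    refine ⟨WithLp.toLp 2 fun p => d p.1 p.2, fun j => (hd j).1, ?_⟩
    ext ⟨j, i⟩
    rw [hA]
    exact (hd j).2 i
end
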